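/- Let T be a finite tree with perfect matching M, xy ∈ M, and suppose all components of T − {x,y} adjacent to y are H_1^2,...,H_l^2 with associated matching edges x_i^2 y_i^2 ∈ M where x_i^2 is adjacent to y. If each (H_i^2)_B^3 has a Hamiltonian (x_i^2, y_i^2)-path P_i^2, then concatenating x, y_1^2 P_1^2 x_1^2, ..., y_l^2 P_l^2 x_l^2, y yields a Hamiltonian (x,y)-path of T_B^3, since consecutive connecting pairs are at odd distance at most 3 in T. -/

import Mathlib

/-- The `t`-th bi-power of a graph `G`: two vertices are adjacent iff their
distance in `G` is odd and at most `t`. -/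
def SimpleGraph.biPower {V : Type*} (G : SimpleGraph V) (t : ℕ) : SimpleGraph V where
  Adj x y := Odd (G.dist x y) ∧ G.dist x y ≤ t
  symm := ⟨fun x y h => by try simp only [] at h ⊢
                           rwa [SimpleGraph.dist_comm]⟩
  loopless := ⟨fun x h => by simp [SimpleGraph.dist_self, Nat.odd_iff] at h⟩

/-- The graph obtained from `G` by deleting the vertices in `s` (keeping the
vertex type, the deleted vertices become isolated). -/
def SimpleGraph.removeVerts {V : Type*} (G : SimpleGraph V) (s : Set V) : SimpleGraph V where
  Adj a b := G.Adj a b ∧ a ∉ s ∧ b ∉ s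
  symm := ⟨fun a b h => by
    try simp only [] at h ⊢
    exact ⟨h.1.symm, h.2.2, h.2.1⟩⟩
  loopless := ⟨fun a h => G.loopless.irrefl a h.1⟩

/-!
Every connecting step of the concatenation `x, P_0⁻¹, …, P_{l-1}⁻¹, y` is realised by a walk of
length 1 or 3 in `T` (`v – y`, or `v – y – x2 i – y2 i` for `v` a neighbour of `y`), and since a
tree is bipartite, a walk of odd length at most 3 certifies `T`-distance 1 or 3. The paths `P i`
live in `T - {x, y}`, hence avoid `x` and `y`, and their vertex sets partition the rest of `V(T)`.
-/

namespace SimpleGraph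

variable {V : Type*} {G H : SimpleGraph V} {u v w : V} {t : ℕ}

lemma IsBipartite.even_length_iff (hG : G.IsBipartite) (p q : G.Walk u v) :
    Even p.length ↔ Even q.length := by
  obtain ⟨c⟩ := hG
  let c' : G.Coloring Bool := recolorOfEquiv G finTwoEquiv c
  rw [c'.even_length_iff_congr p, c'.even_length_iff_congr q]

lemma IsBipartite.odd_dist_of_walk (hG : G.IsBipartite) (p : G.Walk u v) (hp : Odd p.length) :
    Odd (G.dist u v) := by
  obtain ⟨q, hq⟩ := p.reachable.exists_walk_length_eq_dist
  rw [← hq, ← Nat.not_even_iff_odd, ← hG.even_length_iff p q, Nat.not_even_iff_odd]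
  exact hp

lemma IsBipartite.biPower_adj_of_walk (hG : G.IsBipartite) (p : G.Walk u v)
    (hodd : Odd p.length) (hlen : p.length ≤ t) : (G.biPower t).Adj u v :=
  ⟨hG.odd_dist_of_walk p hodd, (dist_le p).trans hlen⟩

lemma IsBipartite.biPower_mono (hG : G.IsBipartite) (hHG : H ≤ G) :
    H.biPower t ≤ G.biPower t := by
  rintro u v ⟨hodd, hle⟩
  obtain ⟨p, hp⟩ := exists_walk_of_dist_ne_zero hodd.pos.ne'
  exact hG.biPower_adj_of_walk (p.mapLe hHG) (by rwa [Walk.length_mapLe, hp])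
    (by rwa [Walk.length_mapLe, hp])

lemma removeVerts_le (s : Set V) : G.removeVerts s ≤ G := fun _ _ h => h.1

lemma notMem_of_biPower_removeVerts_adj {s : Set V}
    (h : ((G.removeVerts s).biPower t).Adj u v) : u ∉ s := by
  obtain ⟨p, hp⟩ := exists_walk_of_dist_ne_zero h.1.pos.ne'
  have hnil : ¬p.Nil := by
    rw [← Walk.length_eq_zero_iff, hp]
    exact h.1.pos.ne'
  exact (p.adj_snd hnil).2.1

lemma Walk.exists_adj_of_mem_support (p : G.Walk u v) (hp : ¬p.Nil) (hw : w ∈ p.support) :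
    ∃ w', G.Adj w w' := by
  obtain ⟨e, he, hwe⟩ := (mem_support_iff_exists_mem_edges_of_not_nil hp).mp hw
  induction e using Sym2.ind with
  | h a b =>
    rcases Sym2.mem_iff.mp hwe with rfl | rfl
    · exact ⟨b, p.adj_of_mem_edges he⟩
    · exact ⟨a, (p.adj_of_mem_edges he).symm⟩

lemma Walk.notMem_support_of_biPower_removeVerts {s : Set V}
    (p : ((G.removeVerts s).biPower t).Walk u v) (hp : ¬p.Nil) (hw : w ∈ p.support) : w ∉ s :=
  have ⟨_, hadj⟩ := p.exists_adj_of_mem_support hp hw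
  notMem_of_biPower_removeVerts_adj hadj

lemma exists_walk_support_eq_cons_flatMap_append {ι : Type*} {a b : ι → V}
    (W : ∀ i, G.Walk (a i) (b i)) {y : V} (C : V → Prop) (hCb : ∀ i, C (b i))
    (hCa : ∀ v, C v → ∀ i, G.Adj v (a i)) (hCy : ∀ v, C v → G.Adj v y) (L : List ι) {v : V}
    (hv : C v) : ∃ q : G.Walk v y, q.support = v :: L.flatMap (fun i => (W i).support) ++ [y] := by
  induction L generalizing v with
  | nil => exact ⟨.cons (hCy v hv) .nil, by simp⟩
  | cons i L ih =>
    obtain ⟨q, hq⟩ := ih (hCb i)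
    exact ⟨.cons (hCa v hv i) ((W i).append q), by simp [Walk.support_append, hq]⟩

end SimpleGraph

lemma count_cons_flatMap_finRange_append_eq_one {V : Type*} [DecidableEq V] {l : ℕ}
    (S : Fin l → List V) (H : Fin l → Set V) (hdisj : Pairwise fun i j => Disjoint (H i) (H j))
    (hSH : ∀ i, ∀ v ∈ H i, (S i).count v = 1) (hHS : ∀ i, ∀ v ∈ S i, v ∈ H i) {x y : V}
    (hxy : x ≠ y) (hx : ∀ i, x ∉ S i) (hy : ∀ i, y ∉ S i)
    (hcover : (⋃ i, H i) ∪ {x, y} = Set.univ) (v : V) :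
    (x :: (List.finRange l).flatMap S ++ [y]).count v = 1 := by
  have hsum : ((List.finRange l).flatMap S).count v = ∑ i, (S i).count v := by
    rw [List.count_flatMap, Fin.sum_univ_def]
    rfl
  rw [List.count_append, List.count_cons, List.count_singleton, hsum]
  obtain ⟨_, ⟨i, rfl⟩, hvi⟩ | hv := hcover.symm ▸ Set.mem_univ v
  · have hvS : v ∈ S i := List.count_pos_iff.mp (hSH i v hvi ▸ one_pos)
    have hvx : v ≠ x := fun h => hx i (h ▸ hvS)
    have hvy : v ≠ y := fun h => hy i (h ▸ hvS)
    rw [Finset.sum_eq_single i (fun j _ hji => List.count_eq_zero_of_not_mem fun hvj =>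
      (hdisj hji).ne_of_mem (hHS j v hvj) hvi rfl) (by simp), hSH i v hvi]
    simp [Ne.symm hvx, Ne.symm hvy]
  · obtain rfl | rfl := hv
    · simp [List.count_eq_zero_of_not_mem (hx _), Ne.symm hxy]
    · simp [List.count_eq_zero_of_not_mem (hy _), hxy]

open SimpleGraph in
theorem concatenation_hamiltonian_path_general {V : Type*} [DecidableEq V]
    (T : SimpleGraph V) (hT : T.IsTree) (M : T.Subgraph)
    (x y : V) (hxy : M.Adj x y)
    (l : ℕ) (x2 y2 : Fin l → V)
    (hadj : ∀ i, T.Adj y (x2 i)) (hM2 : ∀ i, M.Adj (x2 i) (y2 i))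
    (H : Fin l → Set V)
    (hdisj : ∀ i j, i ≠ j → Disjoint (H i) (H j))
    (hpart : (⋃ i, H i) ∪ {x, y} = Set.univ)
    (P : ∀ i, ((T.removeVerts {x, y}).biPower 3).Walk (x2 i) (y2 i))
    (hP : ∀ i, (∀ v ∈ H i, (P i).support.count v = 1) ∧ ∀ v ∈ (P i).support, v ∈ H i) :
    ∃ q : (T.biPower 3).Walk x y, q.IsHamiltonian := by
  have hbip := hT.isBipartite
  have hTxy : T.Adj x y := M.adj_sub hxy
  obtain ⟨q, hq⟩ := exists_walk_support_eq_cons_flatMap_append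
    (fun i => ((P i).reverse).mapLe (hbip.biPower_mono (removeVerts_le _))) (T.Adj · y)
    (fun i => (hadj i).symm)
    (fun v hv i => hbip.biPower_adj_of_walk
      (.cons hv (.cons (hadj i) (.cons (M.adj_sub (hM2 i)) .nil))) ⟨1, rfl⟩ le_rfl)
    (fun v hv => hbip.biPower_adj_of_walk (.cons hv .nil) odd_one (by norm_num))
    (List.finRange l) hTxy
  simp only [Walk.support_mapLe_eq_support, Walk.support_reverse] at hq
  have havoid i : ∀ v ∈ ({x, y} : Set V), v ∉ (P i).support := fun v hv hvP =>
    (P i).notMem_support_of_biPower_removeVerts (Walk.not_nil_of_ne (hM2 i).ne) hvP hv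
  refine ⟨q, fun v => hq ▸ count_cons_flatMap_finRange_append_eq_one _ H hdisj
    (fun i v hv => by rw [List.count_reverse]; exact (hP i).1 v hv)
    (fun i v hv => (hP i).2 v (List.mem_reverse.mp hv)) hTxy.ne
    (fun i => mt List.mem_reverse.mp (havoid i x (by simp)))
    (fun i => mt List.mem_reverse.mp (havoid i y (by simp))) hpart v⟩

/-- Let `T` be a finite tree with perfect matching `M` and `xy ∈ M`, and
suppose the components of `T - {x, y}` are `H 0, …, H (l-1)`, together with
`{x, y}` partitioning `V(T)`, each containing a matching edge
`(x2 i)(y2 i) ∈ M` with `x2 i` adjacent to `y`.  If each `(H i)_B^3` has a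
Hamiltonian `(x2 i, y2 i)`-path `P i`, then (concatenating
`x, y2 0 ⋯ x2 0, …, y2 (l-1) ⋯ x2 (l-1), y`) `T_B^3` has a Hamiltonian
`(x, y)`-path. -/
theorem concatenation_hamiltonian_path {V : Type*} [Fintype V] [DecidableEq V]
    (T : SimpleGraph V) (hT : T.IsTree) (M : T.Subgraph) (hM : M.IsPerfectMatching)
    (x y : V) (hxy : M.Adj x y)
    (l : ℕ) (x2 y2 : Fin l → V)
    (hx2x : ∀ i, x2 i ≠ x) (hadj : ∀ i, T.Adj y (x2 i)) (hM2 : ∀ i, M.Adj (x2 i) (y2 i))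
    (H : Fin l → Set V)
    (hH : ∀ i, H i = {b | (T.removeVerts {x, y}).Reachable (x2 i) b})
    (hdisj : ∀ i j, i ≠ j → Disjoint (H i) (H j))
    (hpart : (⋃ i, H i) ∪ {x, y} = Set.univ)
    (P : ∀ i, ((T.removeVerts {x, y}).biPower 3).Walk (x2 i) (y2 i))
    (hP : ∀ i, (∀ v ∈ H i, (P i).support.count v = 1) ∧ ∀ v ∈ (P i).support, v ∈ H i) :
    ∃ q : (T.biPower 3).Walk x y, q.IsHamiltonian :=
  concatenation_hamiltonian_path_general T hT M x y hxy l x2 y2 hadj hM2 H hdisj hpart P hP
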